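/- Fix γ ∈ [−3,0), α ∈ (0,1), θ > 0, and t₀ ∈ (0, 1/2). Let f be a real-valued function defined on (0, t₀] × ℝ³ × ℝ³, fix z₀ = (t₀, x₀, v₀), let S and r₀ be the associated rescaling data, and let f_{z₀}(t,x,v) := f(r₀²t+t₀, r₀³Sx+x₀+r₀²t v₀, r₀Sv+v₀). Then there is a constant C depending only on γ, α, θ such that [f_{z₀}]_{C_x^{α/3}log(1/C_v)^{−θ/2}(Q₁)} ≤ C·(log(1/t₀))^{−θ/2}·[f]_{C_x^{α/3}log(1/C_v)^{−θ}(Q_{√(t₀/2)}(z₀))}. -/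

import Mathlib

noncomputable section

open Real Matrix Set

abbrev V3 := Fin 3 → ℝ

/-- Euclidean norm on `Fin d → ℝ`. -/
def eunorm {d : ℕ} (x : Fin d → ℝ) : ℝ := Real.sqrt (∑ i, (x i) ^ 2)

/-- The Japanese bracket `⟨v⟩ = (1+|v|²)^{1/2}`. -/
def jap {d : ℕ} (v : Fin d → ℝ) : ℝ := Real.sqrt (1 + ∑ i, (v i) ^ 2)

/-- Orthogonal projection matrix onto the line spanned by `v₀` (zero when `v₀ = 0`). -/
def projMat (v₀ : V3) : Matrix (Fin 3) (Fin 3) ℝ :=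
  if v₀ = 0 then 0 else Matrix.of fun i j => v₀ i * v₀ j / (v₀ ⬝ᵥ v₀)

/-- The anisotropic scaling matrix `S`: multiplication by `⟨v₀⟩^{1+γ/2}` orthogonally to
`v₀` and by `⟨v₀⟩^{γ/2}` along `v₀`. -/
def Smat (γ : ℝ) (v₀ : V3) : Matrix (Fin 3) (Fin 3) ℝ :=
  jap v₀ ^ (1 + γ/2) • ((1 : Matrix (Fin 3) (Fin 3) ℝ) - projMat v₀) +
    jap v₀ ^ (γ/2) • projMat v₀

/-- The scaling radius `r₀ = ⟨v₀⟩^{−(1+γ/2)₊} min(1, √(t₀/2))`. -/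
def r0 (γ t₀ : ℝ) (v₀ : V3) : ℝ :=
  jap v₀ ^ (-(max (1 + γ/2) 0)) * min 1 (Real.sqrt (t₀/2))

/-- The kinetic rescaling `z ↦ z₀ ∘ (S z)_{r₀}`. -/
def resc (γ : ℝ) (z₀ z : ℝ × V3 × V3) : ℝ × V3 × V3 :=
  ((r0 γ z₀.1 z₀.2.2) ^ 2 * z.1 + z₀.1,
    ((r0 γ z₀.1 z₀.2.2) ^ 3) • (Smat γ z₀.2.2).mulVec z.2.1 + z₀.2.1 +
      ((r0 γ z₀.1 z₀.2.2) ^ 2 * z.1) • z₀.2.2,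
    (r0 γ z₀.1 z₀.2.2) • (Smat γ z₀.2.2).mulVec z.2.2 + z₀.2.2)

/-- The kinetic cylinder `Q_r = (-r², 0] × B_{r³}(0) × B_r(0)` in `ℝ × ℝ³ × ℝ³`. -/
def Qcyl (r : ℝ) : Set (ℝ × V3 × V3) :=
  {z | z.1 ∈ Set.Ioc (-r ^ 2) 0 ∧ eunorm z.2.1 < r ^ 3 ∧ eunorm z.2.2 < r}

/-- The shifted kinetic cylinder `Q_r(z₀)`. -/
def Qz (r : ℝ) (z₀ : ℝ × V3 × V3) : Set (ℝ × V3 × V3) :=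
  {z | z₀.1 - r ^ 2 < z.1 ∧ z.1 ≤ z₀.1 ∧
    eunorm (z.2.1 - z₀.2.1 - (z.1 - z₀.1) • z₀.2.2) < r ^ 3 ∧
    eunorm (z.2.2 - z₀.2.2) < r}

/-- The log-Hölder seminorm bound `[u]_{C_x^{a/3} log(1/C_v)^{−θ}(Q)} ≤ K`,
stated pointwise. -/
def LogMixedBound (a θ : ℝ) (Q : Set (ℝ × V3 × V3)) (u : ℝ × V3 × V3 → ℝ) (K : ℝ) : Prop :=
  ∀ t x v x' v', (t, x, v) ∈ Q → (t, x', v') ∈ Q →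
    eunorm (x - x') < 1/2 → eunorm (v - v') < 1/2 →
    |u (t, x, v) - u (t, x', v')| ≤
      K * (eunorm (x - x') ^ (a/3) + Real.log (1 / eunorm (v - v')) ^ (-θ))

/-!
The rescaling maps `Q₁` into `Q_{√(t₀/2)}(z₀)` and contracts: `|S w| ≤ ⟨v₀⟩^{(1+γ/2)₊} |w|`
and `r₀ ⟨v₀⟩^{(1+γ/2)₊} = min(1, √(t₀/2))`, so spatial increments shrink by a factor `≤ t₀`
and velocity increments by `√(t₀/2)`. The spatial term then gains
`t₀^{α/3} ≲ log(1/t₀)^{-θ/2}`. For the velocity term, `log(1/(√(t₀/2) d)) ≥ ½ log(1/t₀) + log(1/d)`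
and `(a + b)^{-θ} ≤ (ab)^{-θ/2}` trade half of the exponent `θ` for the factor
`log(1/t₀)^{-θ/2}`.
-/

open scoped RealInnerProductSpace

lemma eunorm_eq_norm {d : ℕ} (x : Fin d → ℝ) : eunorm x = ‖WithLp.toLp 2 x‖ := by
  simp [eunorm, EuclideanSpace.norm_eq]

lemma eunorm_nonneg {d : ℕ} (x : Fin d → ℝ) : 0 ≤ eunorm x := Real.sqrt_nonneg _

lemma eunorm_zero {d : ℕ} : eunorm (0 : Fin d → ℝ) = 0 := by simp [eunorm]

lemma eunorm_smul {d : ℕ} (c : ℝ) (x : Fin d → ℝ) : eunorm (c • x) = |c| * eunorm x := by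
  simp only [eunorm_eq_norm, WithLp.toLp_smul, norm_smul, Real.norm_eq_abs]

lemma eunorm_single {d : ℕ} (i : Fin d) (c : ℝ) : eunorm (Pi.single i c) = |c| := by
  rw [eunorm_eq_norm, ← Real.norm_eq_abs, ← PiLp.norm_single 2 (fun _ => ℝ) i c]
  rfl

lemma norm_smul_add_smul_le_of_inner_eq_zero {E : Type*} [NormedAddCommGroup E]
    [InnerProductSpace ℝ E] {a b : E} (hab : ⟪a, b⟫ = 0) {A B M : ℝ} (hA : |A| ≤ M)
    (hB : |B| ≤ M) : ‖A • a + B • b‖ ≤ M * ‖a + b‖ := by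
  have hM : 0 ≤ M := (abs_nonneg A).trans hA
  have pythagoras {A B : ℝ} : ‖A • a + B • b‖ ^ 2 = A ^ 2 * ‖a‖ ^ 2 + B ^ 2 * ‖b‖ ^ 2 := by
    have h : ⟪A • a, B • b⟫ = 0 := by
      rw [real_inner_smul_left, real_inner_smul_right, hab, mul_zero, mul_zero]
    rw [sq, norm_add_sq_eq_norm_sq_add_norm_sq_real h, norm_smul, norm_smul,
      Real.norm_eq_abs, Real.norm_eq_abs]
    simp only [← sq_abs A, ← sq_abs B]
    ring
  have hA2 : A ^ 2 ≤ M ^ 2 := by rw [← sq_abs A]; gcongr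
  have hB2 : B ^ 2 ≤ M ^ 2 := by rw [← sq_abs B]; gcongr
  refine (pow_le_pow_iff_left₀ (norm_nonneg _) (by positivity) two_ne_zero).mp ?_
  rw [pythagoras, mul_pow, ← one_smul ℝ a, ← one_smul ℝ b, pythagoras]
  simp only [one_smul, one_pow, one_mul]
  nlinarith [sq_nonneg ‖a‖, sq_nonneg ‖b‖]

lemma projMat_mulVec_orthogonal (v₀ w : V3) :
    (w - projMat v₀ *ᵥ w) ⬝ᵥ projMat v₀ *ᵥ w = 0 := by
  by_cases h : v₀ = 0
  · simp [projMat, h]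
  have hv : v₀ ⬝ᵥ v₀ ≠ 0 := fun h' => h (dotProduct_self_eq_zero.mp h')
  have hp : projMat v₀ *ᵥ w = ((v₀ ⬝ᵥ w) / (v₀ ⬝ᵥ v₀)) • v₀ := by
    ext i
    simp only [projMat, if_neg h, Matrix.mulVec, dotProduct, Matrix.of_apply, Pi.smul_apply,
      smul_eq_mul, Finset.sum_div, Finset.sum_mul]
    exact Finset.sum_congr rfl fun j _ => by ring
  rw [hp, sub_dotProduct, dotProduct_smul, dotProduct_smul, smul_dotProduct, dotProduct_comm w]
  simp only [smul_eq_mul]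
  field_simp
  ring

lemma one_le_jap {d : ℕ} (v : Fin d → ℝ) : 1 ≤ jap v :=
  Real.one_le_sqrt.mpr (le_add_of_nonneg_right (Finset.sum_nonneg fun i _ => sq_nonneg (v i)))

lemma jap_pos {d : ℕ} (v : Fin d → ℝ) : 0 < jap v := one_pos.trans_le (one_le_jap v)

lemma Smat_mulVec (γ : ℝ) (v₀ w : V3) :
    Smat γ v₀ *ᵥ w = jap v₀ ^ (1 + γ/2) • (w - projMat v₀ *ᵥ w) +
      jap v₀ ^ (γ/2) • projMat v₀ *ᵥ w := by
  rw [Smat, Matrix.add_mulVec, Matrix.smul_mulVec, Matrix.smul_mulVec, Matrix.sub_mulVec,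
    Matrix.one_mulVec]

lemma eunorm_Smat_mulVec_le (γ : ℝ) (v₀ w : V3) :
    eunorm (Smat γ v₀ *ᵥ w) ≤ jap v₀ ^ max (1 + γ/2) 0 * eunorm w := by
  have hle {e : ℝ} (he : e ≤ max (1 + γ/2) 0) : |jap v₀ ^ e| ≤ jap v₀ ^ max (1 + γ/2) 0 := by
    rw [abs_of_pos (Real.rpow_pos_of_pos (jap_pos v₀) e)]
    exact Real.rpow_le_rpow_of_exponent_le (one_le_jap v₀) he
  have horth : ⟪WithLp.toLp 2 (w - projMat v₀ *ᵥ w), WithLp.toLp 2 (projMat v₀ *ᵥ w)⟫ = 0 := by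
    rw [EuclideanSpace.inner_toLp_toLp, star_trivial, dotProduct_comm,
      projMat_mulVec_orthogonal]
  rw [Smat_mulVec, eunorm_eq_norm, eunorm_eq_norm, WithLp.toLp_add, WithLp.toLp_smul,
    WithLp.toLp_smul]
  simpa using norm_smul_add_smul_le_of_inner_eq_zero horth (hle (le_max_left _ _))
    (hle ((by linarith : γ/2 ≤ 1 + γ/2).trans (le_max_left _ _)))

section ScalingRadius

variable (γ t₀ : ℝ) (v₀ : V3)

lemma r0_nonneg : 0 ≤ r0 γ t₀ v₀ :=
  mul_nonneg (Real.rpow_nonneg (jap_pos v₀).le _) (le_min zero_le_one (Real.sqrt_nonneg _))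

lemma r0_pos (ht : 0 < t₀) : 0 < r0 γ t₀ v₀ :=
  mul_pos (Real.rpow_pos_of_pos (jap_pos v₀) _) (lt_min one_pos (Real.sqrt_pos.mpr (by linarith)))

lemma r0_mul_jap_rpow : r0 γ t₀ v₀ * jap v₀ ^ max (1 + γ/2) 0 = min 1 (Real.sqrt (t₀/2)) := by
  rw [r0, mul_right_comm, ← Real.rpow_add (jap_pos v₀), neg_add_cancel, Real.rpow_zero, one_mul]

lemma r0_le : r0 γ t₀ v₀ ≤ min 1 (Real.sqrt (t₀/2)) := by
  rw [← r0_mul_jap_rpow]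
  exact le_mul_of_one_le_right (r0_nonneg γ t₀ v₀)
    (Real.one_le_rpow (one_le_jap v₀) (le_max_right _ _))

lemma eunorm_r0_pow_smul_Smat_mulVec_le (k : ℕ) (w : V3) :
    eunorm (r0 γ t₀ v₀ ^ (k + 1) • Smat γ v₀ *ᵥ w) ≤
      min 1 (Real.sqrt (t₀/2)) ^ (k + 1) * eunorm w := by
  have hr := r0_nonneg γ t₀ v₀
  rw [eunorm_smul, abs_of_nonneg (by positivity)]
  calc r0 γ t₀ v₀ ^ (k + 1) * eunorm (Smat γ v₀ *ᵥ w)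
      ≤ r0 γ t₀ v₀ ^ (k + 1) * (jap v₀ ^ max (1 + γ/2) 0 * eunorm w) := by
        gcongr; exact eunorm_Smat_mulVec_le γ v₀ w
    _ = r0 γ t₀ v₀ ^ k * min 1 (Real.sqrt (t₀/2)) * eunorm w := by
        rw [← r0_mul_jap_rpow]; ring
    _ ≤ min 1 (Real.sqrt (t₀/2)) ^ (k + 1) * eunorm w := by
        rw [pow_succ]; gcongr; exacts [eunorm_nonneg w, r0_le γ t₀ v₀]

end ScalingRadius

section Rescaling

variable (γ t₀ : ℝ) (x₀ v₀ : V3)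

lemma resc_mem_Qz (ht : 0 < t₀) {z : ℝ × V3 × V3} (hz : z ∈ Qcyl 1) :
    resc γ (t₀, x₀, v₀) z ∈ Qz (Real.sqrt (t₀/2)) (t₀, x₀, v₀) := by
  obtain ⟨⟨ht₁, ht₂⟩, hx, hv⟩ := hz
  rw [one_pow] at ht₁ hx
  set m := min 1 (Real.sqrt (t₀/2))
  have hr := r0_pos γ t₀ v₀ ht
  have hrm := r0_le γ t₀ v₀
  have hms : m ≤ Real.sqrt (t₀/2) := min_le_right _ _
  have hX := eunorm_r0_pow_smul_Smat_mulVec_le γ t₀ v₀ 2 z.2.1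
  have hV := eunorm_r0_pow_smul_Smat_mulVec_le γ t₀ v₀ 0 z.2.2
  rw [zero_add, pow_one, pow_one] at hV
  simp only [Qz, resc, Set.mem_ofPred_eq, add_sub_cancel_right, sub_sub, add_assoc]
  have hm0 : 0 < m := hr.trans_le hrm
  refine ⟨?_, ?_, ?_, ?_⟩
  · nlinarith [pow_pos hr 2]
  · nlinarith [pow_pos hr 2]
  · calc _ ≤ m ^ 3 * eunorm z.2.1 := hX
      _ < m ^ 3 := mul_lt_of_lt_one_right (by positivity) hx
      _ ≤ Real.sqrt (t₀/2) ^ 3 := by gcongr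
  · calc _ ≤ m * eunorm z.2.2 := hV
      _ < m := mul_lt_of_lt_one_right hm0 hv
      _ ≤ Real.sqrt (t₀/2) := hms

lemma eunorm_resc_x_sub_le (ht : 0 ≤ t₀) (t : ℝ) (x v x' v' : V3) :
    eunorm ((resc γ (t₀, x₀, v₀) (t, x, v)).2.1 - (resc γ (t₀, x₀, v₀) (t, x', v')).2.1) ≤
      t₀ * eunorm (x - x') := by
  set m := min 1 (Real.sqrt (t₀/2))
  have hm0 : 0 ≤ m := le_min zero_le_one (Real.sqrt_nonneg _)
  have hm3 : m ^ 3 ≤ t₀ :=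
    calc m ^ 3 ≤ m ^ 2 := pow_le_pow_of_le_one hm0 (min_le_left _ _) (by norm_num)
      _ ≤ Real.sqrt (t₀/2) ^ 2 := by gcongr; exact min_le_right _ _
      _ ≤ t₀ := by rw [Real.sq_sqrt (by linarith)]; linarith
  calc _ = eunorm (r0 γ t₀ v₀ ^ 3 • Smat γ v₀ *ᵥ (x - x')) := by
        simp only [resc, Matrix.mulVec_sub, smul_sub]; congr 1; abel
    _ ≤ m ^ 3 * eunorm (x - x') := eunorm_r0_pow_smul_Smat_mulVec_le γ t₀ v₀ 2 _
    _ ≤ t₀ * eunorm (x - x') := by gcongr; exact eunorm_nonneg _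

lemma eunorm_resc_v_sub_le (t : ℝ) (x v x' v' : V3) :
    eunorm ((resc γ (t₀, x₀, v₀) (t, x, v)).2.2 - (resc γ (t₀, x₀, v₀) (t, x', v')).2.2) ≤
      Real.sqrt (t₀/2) * eunorm (v - v') := by
  calc _ = eunorm (r0 γ t₀ v₀ ^ (0 + 1) • Smat γ v₀ *ᵥ (v - v')) := by
        simp only [resc, Matrix.mulVec_sub, smul_sub, zero_add, pow_one, add_sub_add_right_eq_sub]
    _ ≤ min 1 (Real.sqrt (t₀/2)) ^ (0 + 1) * eunorm (v - v') :=
        eunorm_r0_pow_smul_Smat_mulVec_le γ t₀ v₀ 0 _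
    _ ≤ Real.sqrt (t₀/2) * eunorm (v - v') := by
        rw [zero_add, pow_one]; gcongr; exacts [eunorm_nonneg _, min_le_right _ _]

end Rescaling

lemma add_mem_Qz {r t₀ : ℝ} {x₀ v₀ w : V3} (hr : 0 < r) (hw : eunorm w < r ^ 3) :
    (t₀, x₀ + w, v₀) ∈ Qz r (t₀, x₀, v₀) := by
  simp only [Qz, Set.mem_ofPred_eq, sub_self, zero_smul, sub_zero, add_sub_cancel_left,
    eunorm_zero]
  exact ⟨by nlinarith, le_rfl, hw, hr⟩

lemma LogMixedBound.nonneg {a θ K : ℝ} {Q : Set (ℝ × V3 × V3)} {u : ℝ × V3 × V3 → ℝ}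
    (hu : LogMixedBound a θ Q u K) {t : ℝ} {x x' v : V3} (hz : (t, x, v) ∈ Q)
    (hz' : (t, x', v) ∈ Q) (hx₀ : 0 < eunorm (x - x')) (hx₁ : eunorm (x - x') < 1/2) :
    0 ≤ K := by
  have h := hu t x v x' v hz hz' hx₁ (by rw [sub_self, eunorm_zero]; norm_num)
  have hpos : 0 < eunorm (x - x') ^ (a/3) + Real.log (1 / eunorm (v - v)) ^ (-θ) := by
    rw [sub_self, eunorm_zero, div_zero, Real.log_zero]
    exact add_pos_of_pos_of_nonneg (Real.rpow_pos_of_pos hx₀ _) (Real.rpow_nonneg le_rfl _)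
  exact nonneg_of_mul_nonneg_left ((abs_nonneg _).trans h) hpos

lemma LogMixedBound.nonneg_of_Qz {a θ K r : ℝ} {z₀ : ℝ × V3 × V3} {u : ℝ × V3 × V3 → ℝ}
    (hu : LogMixedBound a θ (Qz r z₀) u K) (hr : 0 < r) : 0 ≤ K := by
  obtain ⟨t₀, x₀, v₀⟩ := z₀
  obtain ⟨δ, hδ, hδr, hδ1⟩ : ∃ δ, 0 < δ ∧ δ < r ^ 3 ∧ δ < 1/2 := by
    obtain ⟨δ, hδ, hδm⟩ := exists_between (lt_min (pow_pos hr 3) one_half_pos)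
    exact ⟨δ, hδ, lt_min_iff.mp hδm⟩
  have hw : eunorm (Pi.single 0 δ : V3) = δ := by rw [eunorm_single, abs_of_pos hδ]
  refine hu.nonneg (add_mem_Qz hr (hw.trans_lt hδr)) (add_mem_Qz (w := 0) hr ?_) ?_ ?_
  · rw [eunorm_zero]; positivity
  · rwa [add_zero, add_sub_cancel_left, hw]
  · rwa [add_zero, add_sub_cancel_left, hw]

lemma exists_rpow_le_mul_log_inv_rpow_neg {a b : ℝ} (ha : 0 < a) (hb : 0 < b) :
    ∃ C > 0, ∀ t : ℝ, 0 < t → t < 1 → t ^ a ≤ C * Real.log (1/t) ^ (-b) := by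
  refine ⟨Real.exp (-b * (1 + Real.log (a/b))), Real.exp_pos _, fun t ht ht1 => ?_⟩
  have hL : 0 < Real.log (1/t) := Real.log_pos (by rwa [lt_one_div one_pos ht, div_one])
  -- `log y ≤ y - 1` at `y = a L / b` bounds `b log L - a L` uniformly in `L`.
  have key := Real.log_le_sub_one_of_pos (mul_pos (div_pos ha hb) hL)
  rw [Real.log_mul (div_pos ha hb).ne' hL.ne'] at key
  have hab : b * (a / b * Real.log (1/t)) = a * Real.log (1/t) := by field_simp
  rw [Real.rpow_def_of_pos ht, Real.rpow_def_of_pos hL, ← Real.exp_add, Real.exp_le_exp,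
    show Real.log t = -Real.log (1/t) by rw [one_div, Real.log_inv, neg_neg]]
  nlinarith [mul_le_mul_of_nonneg_left key hb.le]

lemma add_rpow_neg_le_mul_rpow_neg {a b θ : ℝ} (ha : 0 < a) (hb : 0 < b) (hθ : 0 ≤ θ) :
    (a + b) ^ (-θ) ≤ (a * b) ^ (-(θ/2)) := by
  calc (a + b) ^ (-θ) = ((a + b) ^ 2) ^ (-(θ/2)) := by
        rw [← Real.rpow_natCast, ← Real.rpow_mul (by positivity)]; push_cast; ring_nf
    _ ≤ (a * b) ^ (-(θ/2)) :=
        Real.rpow_le_rpow_of_nonpos (by positivity) (by nlinarith) (by linarith)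

lemma half_log_inv_add_log_inv_le {t d D : ℝ} (ht : 0 < t) (hD : 0 < D)
    (hDd : D ≤ Real.sqrt (t/2) * d) :
    Real.log (1/t) / 2 + Real.log (1/d) ≤ Real.log (1/D) := by
  have hs : 0 < Real.sqrt (t/2) := Real.sqrt_pos.mpr (by linarith)
  have hd : 0 < d := pos_of_mul_pos_right (hD.trans_le hDd) hs.le
  have hlogD : Real.log D ≤ (Real.log t - Real.log 2) / 2 + Real.log d := by
    calc Real.log D ≤ Real.log (Real.sqrt (t/2) * d) := Real.log_le_log hD hDd
      _ = _ := by rw [Real.log_mul hs.ne' hd.ne', Real.log_sqrt (by linarith),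
          Real.log_div ht.ne' two_ne_zero]
  simp only [one_div, Real.log_inv]
  linarith [Real.log_pos one_lt_two]

lemma log_one_div_nonneg {d : ℝ} (hd : 0 ≤ d) (hd1 : d ≤ 1) : 0 ≤ Real.log (1/d) := by
  rw [one_div, Real.log_inv, neg_nonneg]; exact Real.log_nonpos hd hd1

lemma log_inv_rpow_neg_le_of_le_sqrt_mul {θ t d D : ℝ} (hθ : 0 < θ) (ht : 0 < t) (ht1 : t < 1)
    (hd : 0 ≤ d) (hd1 : d < 1) (hD : 0 ≤ D) (hDd : D ≤ Real.sqrt (t/2) * d) :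
    Real.log (1/D) ^ (-θ) ≤
      2 ^ (θ/2) * Real.log (1/t) ^ (-(θ/2)) * Real.log (1/d) ^ (-(θ/2)) := by
  have hL : 0 < Real.log (1/t) := Real.log_pos (by rwa [lt_one_div one_pos ht, div_one])
  rcases hD.eq_or_lt with rfl | hD
  · rw [div_zero, Real.log_zero, Real.zero_rpow (neg_ne_zero.mpr hθ.ne')]
    have := log_one_div_nonneg hd hd1.le
    positivity
  have hdpos : 0 < d := pos_of_mul_pos_right (hD.trans_le hDd) (Real.sqrt_nonneg _)
  have hl : 0 < Real.log (1/d) := Real.log_pos (by rwa [lt_one_div one_pos hdpos, div_one])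
  calc Real.log (1/D) ^ (-θ) ≤ (Real.log (1/t) / 2 + Real.log (1/d)) ^ (-θ) :=
        Real.rpow_le_rpow_of_nonpos (by positivity) (half_log_inv_add_log_inv_le ht hD hDd)
          (by linarith)
    _ ≤ (Real.log (1/t) / 2 * Real.log (1/d)) ^ (-(θ/2)) :=
        add_rpow_neg_le_mul_rpow_neg (by positivity) hl hθ.le
    _ = 2 ^ (θ/2) * Real.log (1/t) ^ (-(θ/2)) * Real.log (1/d) ^ (-(θ/2)) := by
        rw [Real.mul_rpow (by positivity) hl.le, Real.div_rpow hL.le zero_le_two,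
          Real.rpow_neg zero_le_two, div_inv_eq_mul, mul_comm (Real.log (1/t) ^ _)]

lemma LogMixedBound.abs_sub_resc_le {α θ γ t₀ K : ℝ} {x₀ v₀ : V3} {f : ℝ × V3 × V3 → ℝ}
    (hα : 0 ≤ α) (hθ : 0 < θ) (ht : 0 < t₀) (ht1 : t₀ < 1/2)
    (hf : LogMixedBound α θ (Qz (Real.sqrt (t₀/2)) (t₀, x₀, v₀)) f K)
    {t : ℝ} {x v x' v' : V3} (hz : (t, x, v) ∈ Qcyl 1) (hz' : (t, x', v') ∈ Qcyl 1)
    (hx : eunorm (x - x') < 1/2) (hv : eunorm (v - v') < 1/2) :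
    |f (resc γ (t₀, x₀, v₀) (t, x, v)) - f (resc γ (t₀, x₀, v₀) (t, x', v'))| ≤
      K * (t₀ ^ (α/3) * eunorm (x - x') ^ (α/3) +
        2 ^ (θ/2) * Real.log (1/t₀) ^ (-(θ/2)) * Real.log (1 / eunorm (v - v')) ^ (-(θ/2))) := by
  set Z := resc γ (t₀, x₀, v₀) (t, x, v)
  set Z' := resc γ (t₀, x₀, v₀) (t, x', v')
  have hK : 0 ≤ K := hf.nonneg_of_Qz (Real.sqrt_pos.mpr (by linarith))
  have hX := eunorm_resc_x_sub_le γ t₀ x₀ v₀ ht.le t x v x' v'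
  have hV := eunorm_resc_v_sub_le γ t₀ x₀ v₀ t x v x' v'
  have hs1 : Real.sqrt (t₀/2) ≤ 1 := Real.sqrt_le_one.mpr (by linarith)
  calc |f Z - f Z'|
      ≤ K * (eunorm (Z.2.1 - Z'.2.1) ^ (α/3) + Real.log (1 / eunorm (Z.2.2 - Z'.2.2)) ^ (-θ)) :=
        hf Z.1 Z.2.1 Z.2.2 Z'.2.1 Z'.2.2 (resc_mem_Qz γ t₀ x₀ v₀ ht hz)
          (resc_mem_Qz γ t₀ x₀ v₀ ht hz') (by nlinarith [eunorm_nonneg (x - x')])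
          (by nlinarith [eunorm_nonneg (v - v')])
    _ ≤ _ := by
        gcongr
        · rw [← Real.mul_rpow ht.le (eunorm_nonneg _)]
          exact Real.rpow_le_rpow (eunorm_nonneg _) hX (by linarith)
        · exact log_inv_rpow_neg_le_of_le_sqrt_mul hθ ht (by linarith) (eunorm_nonneg _)
            (by linarith) (eunorm_nonneg _) hV

theorem log_holder_rescaling_general (γ α θ : ℝ)
    (hα : α ∈ Set.Ioo (0:ℝ) 1) (hθ : 0 < θ) :
    ∃ C : ℝ, 0 < C ∧
      ∀ (t₀ : ℝ) (x₀ v₀ : V3) (f : ℝ × V3 × V3 → ℝ) (K : ℝ),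
        0 < t₀ → t₀ < 1/2 →
        LogMixedBound α θ (Qz (Real.sqrt (t₀/2)) (t₀, x₀, v₀)) f K →
        LogMixedBound α (θ/2) (Qcyl 1) (fun z => f (resc γ (t₀, x₀, v₀) z))
          (C * Real.log (1/t₀) ^ (-(θ/2)) * K) := by
  obtain ⟨C₀, hC₀, hpow_le⟩ := exists_rpow_le_mul_log_inv_rpow_neg (a := α/3) (b := θ/2)
    (by linarith [hα.1]) (by linarith)
  set C := max C₀ (2 ^ (θ/2))
  refine ⟨C, lt_max_of_lt_left hC₀, ?_⟩
  intro t₀ x₀ v₀ f K ht ht1 hf t x v x' v' hz hz' hx hv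
  set P := Real.log (1/t₀) ^ (-(θ/2))
  set X := eunorm (x - x') ^ (α/3)
  set V := Real.log (1 / eunorm (v - v')) ^ (-(θ/2))
  have hK : 0 ≤ K := hf.nonneg_of_Qz (Real.sqrt_pos.mpr (by linarith))
  have hP : 0 ≤ P := Real.rpow_nonneg (log_one_div_nonneg ht.le (by linarith)) _
  have hX : 0 ≤ X := Real.rpow_nonneg (eunorm_nonneg _) _
  have hV : 0 ≤ V := Real.rpow_nonneg (log_one_div_nonneg (eunorm_nonneg _) (by linarith)) _
  calc _ ≤ K * (t₀ ^ (α/3) * X + 2 ^ (θ/2) * P * V) :=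
        hf.abs_sub_resc_le hα.1.le hθ ht ht1 hz hz' hx hv
    _ ≤ K * (C * P * X + C * P * V) := by
        gcongr
        · exact (hpow_le t₀ ht (by linarith)).trans (by gcongr; exact le_max_left _ _)
        · exact le_max_right _ _
    _ = C * P * K * (X + V) := by ring

/-- **Scaling of the log-Hölder seminorm under the kinetic rescaling** (Lemma 4.8):
`[f_{z₀}]_{C_x^{α/3} log(1/C_v)^{−θ/2}(Q₁)} ≲ (log(1/t₀))^{−θ/2}
[f]_{C_x^{α/3} log(1/C_v)^{−θ}(Q_{√(t₀/2)}(z₀))}`.  The constant `C` depends only on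
`γ`, `α`, `θ`. -/
theorem log_holder_rescaling (γ α θ : ℝ) (hγ : γ ∈ Set.Ico (-3:ℝ) 0)
    (hα : α ∈ Set.Ioo (0:ℝ) 1) (hθ : 0 < θ) :
    ∃ C : ℝ, 0 < C ∧
      ∀ (t₀ : ℝ) (x₀ v₀ : V3) (f : ℝ × V3 × V3 → ℝ) (K : ℝ),
        0 < t₀ → t₀ < 1/2 →
        LogMixedBound α θ (Qz (Real.sqrt (t₀/2)) (t₀, x₀, v₀)) f K →
        LogMixedBound α (θ/2) (Qcyl 1) (fun z => f (resc γ (t₀, x₀, v₀) z))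
          (C * Real.log (1/t₀) ^ (-(θ/2)) * K) :=
  log_holder_rescaling_general γ α θ hα hθ
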